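/- Let $n \geq 1$, let $u_1, \dots, u_n$ be Borel probability measures on $\mathbb{R}$ with finite second moments and quantile functions $G_{u_1}, \dots, G_{u_n}$, and let $(\lambda_1, \dots, \lambda_n) \in \Sigma_n$. Let $W_2^2(v, u_i) = \int_0^1 (G_v(p) - G_{u_i}(p))^2\, dp$. Then the Borel probability measure $b$ whose quantile function equals $\sum_{i=1}^n \lambda_i G_{u_i}$ almost everywhere on $(0,1)$ minimizes the functional $v \mapsto \sum_{i=1}^n \lambda_i W_2^2(v, u_i)$ over all Borel probability measures $v$ on $\mathbb{R}$ with finite second moment; i.e., $b$ is the Wasserstein barycenter of $u_1,\dots,u_n$ with weights $\lambda_1,\dots,\lambda_n$. -/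

import Mathlib

open MeasureTheory Set

/-- Cumulative distribution function of a measure on `ℝ`. -/
noncomputable def cdfFn (u : Measure ℝ) (x : ℝ) : ℝ := (u (Iic x)).toReal

/-- Quantile function (generalized inverse cdf) of a measure on `ℝ`. -/
noncomputable def quantileFn (u : Measure ℝ) (p : ℝ) : ℝ := sInf {x : ℝ | p ≤ cdfFn u x}

/-- The squared `L²`-Wasserstein distance in one dimension, expressed via quantile
functions. -/
noncomputable def W2sq (u v : Measure ℝ) : ℝ :=
  ∫ p in Ioo (0:ℝ) 1, (quantileFn u p - quantileFn v p) ^ 2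

section aux

open ProbabilityTheory

variable (u : Measure ℝ) [IsProbabilityMeasure u]

lemma cdfFn_eq (x : ℝ) : cdfFn u x = cdf u x := (cdf_eq_real u x).symm

variable {u}

lemma quantile_set_nonempty {p : ℝ} (hp1 : p < 1) : {x : ℝ | p ≤ cdfFn u x}.Nonempty := by
  have h := (tendsto_cdf_atTop u).eventually (eventually_ge_nhds hp1)
  obtain ⟨x, hx⟩ := h.exists
  exact ⟨x, by rw [mem_setOf_eq, cdfFn_eq]; exact hx⟩

lemma quantile_set_bddBelow {p : ℝ} (hp0 : 0 < p) : BddBelow {x : ℝ | p ≤ cdfFn u x} := by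
  have h := (tendsto_cdf_atBot u).eventually (eventually_lt_nhds hp0)
  obtain ⟨y, hy⟩ := h.exists
  refine ⟨y, fun x hx => ?_⟩
  rw [mem_setOf_eq, cdfFn_eq] at hx
  by_contra hxy
  exact absurd hx (not_le.2 (lt_of_le_of_lt (monotone_cdf u (le_of_not_ge hxy)) hy))

lemma quantile_le_iff {p x : ℝ} (hp0 : 0 < p) (hp1 : p < 1) :
    quantileFn u p ≤ x ↔ p ≤ cdfFn u x := by
  have hne := quantile_set_nonempty (u := u) hp1
  have hbdd := quantile_set_bddBelow (u := u) hp0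
  constructor
  · intro h
    rw [cdfFn_eq]
    have hmono : cdf u (quantileFn u p) ≤ cdf u x := monotone_cdf u h
    refine le_trans ?_ hmono
    by_contra hlt
    push_neg at hlt
    set c := quantileFn u p with hc
    have hrc : ContinuousWithinAt (cdf u) (Ici c) c := (cdf u).right_continuous c
    have hev : ∀ᶠ z in nhdsWithin c (Ici c), cdf u z < p := hrc.eventually (eventually_lt_nhds hlt)
    obtain ⟨w, hw, hsub⟩ := mem_nhdsGE_iff_exists_Ico_subset.1 hev
    obtain ⟨z, hz, hzw⟩ := exists_lt_of_csInf_lt hne (show sInf {x : ℝ | p ≤ cdfFn u x} < w from hw)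
    have hcz : c ≤ z := csInf_le hbdd hz
    have : cdf u z < p := hsub ⟨hcz, hzw⟩
    rw [mem_setOf_eq, cdfFn_eq] at hz
    exact absurd hz (not_le.2 this)
  · intro h
    exact csInf_le hbdd h

/-- Truncated quantile function: equals `quantileFn` on `(0,1)` and `0` elsewhere. -/
noncomputable def qtrunc (u : Measure ℝ) : ℝ → ℝ :=
  fun p => if p ∈ Ioo (0:ℝ) 1 then quantileFn u p else 0

lemma qtrunc_preimage (x : ℝ) :
    qtrunc u ⁻¹' Iic x =
      (Ioo (0:ℝ) 1 ∩ Iic (cdfFn u x)) ∪ ((Ioo (0:ℝ) 1)ᶜ ∩ {p : ℝ | (0:ℝ) ≤ x}) := by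
  ext p
  simp only [qtrunc, mem_preimage, mem_Iic, mem_union, mem_inter_iff, mem_compl_iff, mem_setOf_eq]
  by_cases hp : p ∈ Ioo (0:ℝ) 1
  · simp only [hp, if_pos, not_true_eq_false, false_and, or_false, true_and]
    exact (quantile_le_iff hp.1 hp.2).trans Iff.rfl |>.symm.symm
  · simp [hp]

lemma measurable_qtrunc : Measurable (qtrunc u) := by
  refine measurable_of_Iic fun x => ?_
  rw [qtrunc_preimage]
  by_cases hx : (0:ℝ) ≤ x
  · have : {p : ℝ | (0:ℝ) ≤ x} = univ := eq_univ_of_forall fun _ => hx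
    rw [this]
    exact ((measurableSet_Ioo.inter measurableSet_Iic).union
      (measurableSet_Ioo.compl.inter MeasurableSet.univ))
  · have : {p : ℝ | (0:ℝ) ≤ x} = (∅ : Set ℝ) := by
      ext p; simp [hx]
    rw [this]
    exact ((measurableSet_Ioo.inter measurableSet_Iic).union
      (measurableSet_Ioo.compl.inter MeasurableSet.empty))

lemma quantile_ae_eq_qtrunc :
    quantileFn u =ᵐ[volume.restrict (Ioo (0:ℝ) 1)] qtrunc u := by
  filter_upwards [ae_restrict_mem measurableSet_Ioo] with p hp
  simp [qtrunc, hp]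

lemma aemeasurable_quantile :
    AEMeasurable (quantileFn u) (volume.restrict (Ioo (0:ℝ) 1)) :=
  (measurable_qtrunc (u := u)).aemeasurable.congr quantile_ae_eq_qtrunc.symm

lemma map_quantile_eq :
    (volume.restrict (Ioo (0:ℝ) 1)).map (quantileFn u) = u := by
  rw [Measure.map_congr (quantile_ae_eq_qtrunc (u := u))]
  have hmeas := measurable_qtrunc (u := u)
  have h1 : IsFiniteMeasure ((volume.restrict (Ioo (0:ℝ) 1)).map (qtrunc u)) := by
    constructor
    rw [Measure.map_apply hmeas MeasurableSet.univ]
    simp [Measure.restrict_apply, Real.volume_Ioo]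
  refine Measure.ext_of_Iic _ u fun x => ?_
  rw [Measure.map_apply hmeas measurableSet_Iic, qtrunc_preimage,
    Measure.restrict_apply ((measurableSet_Ioo.inter measurableSet_Iic).union
      (measurableSet_Ioo.compl.inter (by
        by_cases hx : (0:ℝ) ≤ x
        · have : {p : ℝ | (0:ℝ) ≤ x} = univ := eq_univ_of_forall fun _ => hx
          rw [this]; exact MeasurableSet.univ
        · have : {p : ℝ | (0:ℝ) ≤ x} = (∅ : Set ℝ) := by ext p; simp [hx]
          rw [this]; exact MeasurableSet.empty)))]
  have hinter : ((Ioo (0:ℝ) 1 ∩ Iic (cdfFn u x)) ∪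
      ((Ioo (0:ℝ) 1)ᶜ ∩ {p : ℝ | (0:ℝ) ≤ x})) ∩ Ioo (0:ℝ) 1
      = Ioo (0:ℝ) 1 ∩ Iic (cdfFn u x) := by
    ext p
    constructor
    · rintro ⟨(⟨h1, h2⟩ | ⟨h1, _⟩), hp⟩
      · exact ⟨hp, h2⟩
      · exact absurd hp h1
    · rintro ⟨hp, h2⟩
      exact ⟨Or.inl ⟨hp, h2⟩, hp⟩
  rw [hinter, cdfFn_eq]
  have h0 : 0 ≤ cdf u x := cdf_nonneg u x
  have h1' : cdf u x ≤ 1 := cdf_le_one u x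
  have hvol : volume (Ioo (0:ℝ) 1 ∩ Iic (cdf u x)) = ENNReal.ofReal (cdf u x) := by
    rcases lt_or_eq_of_le h1' with h | h
    · have : Ioo (0:ℝ) 1 ∩ Iic (cdf u x) = Ioc (0:ℝ) (cdf u x) := by
        ext p
        simp only [mem_inter_iff, mem_Ioo, mem_Iic, mem_Ioc]
        exact ⟨fun ⟨⟨a, _⟩, c⟩ => ⟨a, c⟩, fun ⟨a, c⟩ => ⟨⟨a, lt_of_le_of_lt c h⟩, c⟩⟩
      rw [this, Real.volume_Ioc, sub_zero]
    · have : Ioo (0:ℝ) 1 ∩ Iic (cdf u x) = Ioo (0:ℝ) 1 := by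
        rw [inter_eq_left]
        intro p hp
        rw [mem_Iic, h]
        exact hp.2.le
      rw [this, Real.volume_Ioo, ← h]
      norm_num
  rw [hvol, ofReal_cdf]

lemma integrable_sq_quantile (hmom : Integrable (fun x => x ^ 2) u) :
    Integrable (fun p => (quantileFn u p) ^ 2) (volume.restrict (Ioo (0:ℝ) 1)) := by
  have h : Integrable (fun x => x ^ 2) ((volume.restrict (Ioo (0:ℝ) 1)).map (quantileFn u)) := by
    rw [map_quantile_eq]; exact hmom
  have := (integrable_map_measure
    (by exact (measurable_id.pow_const 2).aestronglyMeasurable)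
    (aemeasurable_quantile (u := u))).1 h
  exact this

lemma memℒp_quantile (hmom : Integrable (fun x => x ^ 2) u) :
    MemLp (quantileFn u) 2 (volume.restrict (Ioo (0:ℝ) 1)) :=
  (memLp_two_iff_integrable_sq
    (aemeasurable_quantile (u := u)).aestronglyMeasurable).2 (integrable_sq_quantile hmom)

end aux

/-- The probability measure `b` whose quantile function equals `∑ᵢ λᵢ G_{uᵢ}` a.e. on
`(0,1)` minimizes `v ↦ ∑ᵢ λᵢ W₂²(v, uᵢ)` over all probability measures on `ℝ` with
finite second moment: it is the Wasserstein barycenter of `u₁,…,uₙ` with weights `λ`. -/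
theorem barycenter_minimizes
    (n : ℕ) (hn : 1 ≤ n)
    (u : Fin n → Measure ℝ) (hprob : ∀ i, IsProbabilityMeasure (u i))
    (hmom : ∀ i, Integrable (fun x => x ^ 2) (u i))
    (l : Fin n → ℝ) (hl : ∀ i, l i ∈ Icc (0:ℝ) 1) (hsum : ∑ i, l i = 1)
    (b : Measure ℝ) (hbprob : IsProbabilityMeasure b)
    (hbmom : Integrable (fun x => x ^ 2) b)
    (hb : ∀ᵐ p ∂(volume.restrict (Ioo (0:ℝ) 1)),
      quantileFn b p = ∑ i, l i * quantileFn (u i) p) :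
    ∀ v : Measure ℝ, IsProbabilityMeasure v → Integrable (fun x => x ^ 2) v →
      ∑ i, l i * W2sq b (u i) ≤ ∑ i, l i * W2sq v (u i) := by
  intro v hvprob hvmom
  set μ := volume.restrict (Ioo (0:ℝ) 1) with hμ
  haveI := fun i => hprob i
  -- L² membership of all quantile functions
  have hL2u : ∀ i, MemLp (quantileFn (u i)) 2 μ := fun i =>
    haveI := hprob i; memℒp_quantile (hmom i)
  have hL2b : MemLp (quantileFn b) 2 μ := memℒp_quantile hbmom
  have hL2v : MemLp (quantileFn v) 2 μ := memℒp_quantile hvmom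
  -- integrability of squared differences
  have hintb : ∀ i, Integrable (fun p => (quantileFn b p - quantileFn (u i) p) ^ 2) μ :=
    fun i => (hL2b.sub (hL2u i)).integrable_sq
  have hintv : ∀ i, Integrable (fun p => (quantileFn v p - quantileFn (u i) p) ^ 2) μ :=
    fun i => (hL2v.sub (hL2u i)).integrable_sq
  -- rewrite the weighted sums as integrals
  have key : ∀ (w : Measure ℝ),
      (∀ i, Integrable (fun p => (quantileFn w p - quantileFn (u i) p) ^ 2) μ) →
      ∑ i, l i * W2sq w (u i)
        = ∫ p, (∑ i, l i * (quantileFn w p - quantileFn (u i) p) ^ 2) ∂μ := by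
    intro w hint
    rw [integral_finset_sum _ (fun i _ => (hint i).const_mul (l i))]
    refine Finset.sum_congr rfl fun i _ => ?_
    rw [W2sq, ← integral_const_mul]
  rw [key b hintb, key v hintv]
  refine integral_mono_ae
    (integrable_finset_sum _ fun i _ => (hintb i).const_mul (l i))
    (integrable_finset_sum _ fun i _ => (hintv i).const_mul (l i)) ?_
  filter_upwards [hb] with p hp
  set gb := quantileFn b p
  set gv := quantileFn v p
  have e1 : ∀ i, l i * (gv - quantileFn (u i) p) ^ 2
      = l i * (gb - quantileFn (u i) p) ^ 2 + (gv - gb) ^ 2 * l i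
        + 2 * (gv - gb) * (gb * l i - l i * quantileFn (u i) p) := by
    intro i; ring
  have expand : ∑ i, l i * (gv - quantileFn (u i) p) ^ 2
      = ∑ i, l i * (gb - quantileFn (u i) p) ^ 2 + (gv - gb) ^ 2 * (∑ i, l i)
        + 2 * (gv - gb) * (gb * (∑ i, l i) - ∑ i, l i * quantileFn (u i) p) := by
    rw [Finset.sum_congr rfl fun i _ => e1 i, Finset.sum_add_distrib, Finset.sum_add_distrib,
      ← Finset.mul_sum, ← Finset.mul_sum, Finset.sum_sub_distrib, ← Finset.mul_sum]
  rw [expand, hsum, ← hp]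
  nlinarith [sq_nonneg (gv - gb)]
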